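/- arXiv:2508.10204 — 2 statements merged into one kernel-verified Lean document; each statement's English description precedes it below -/
import Mathlib

section
/- If (δ, v, 0) is feasible for the penalized formulation (R) (i.e., (δ, v, ϖ) is feasible with objective value ϖ = 0), then δ is an exact Nash equilibrium of the game. -/
open Finset

variable {N : Type*} [Fintype N] [DecidableEq N] [Nonempty N]
variable {A : N → Type*} [∀ i, Fintype (A i)] [∀ i, DecidableEq (A i)]
variable [∀ i, Nonempty (A i)]

/-- `δ` is a mixed strategy profile: each `δ i` is nonnegative and sums to 1. -/
def IsMixedProfile {N : Type*} {A : N → Type*} [∀ i, Fintype (A i)]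
    (δ : ∀ i, A i → ℝ) : Prop :=
  (∀ i a, 0 ≤ δ i a) ∧ ∀ i, ∑ a, δ i a = 1

/-- Expected utility of player `i` under mixed strategy profile `δ`. -/
def expUtil {N : Type*} [Fintype N] [DecidableEq N] {A : N → Type*}
    [∀ i, Fintype (A i)] (u : N → (∀ j, A j) → ℝ) (δ : ∀ i, A i → ℝ) (i : N) : ℝ :=
  ∑ a : ∀ j, A j, (∏ j, δ j (a j)) * u i a

/-- The point-mass (pure) strategy on action `ai`. -/
def pureStrat {N : Type*} {A : N → Type*} [∀ i, DecidableEq (A i)]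
    (i : N) (ai : A i) : A i → ℝ := fun b => if b = ai then 1 else 0

/-- `u_i(a_i, δ_{-i})`: expected utility of player `i` when playing the pure
action `ai` against the opponents' profile `δ_{-i}`. -/
def devUtil {N : Type*} [Fintype N] [DecidableEq N] {A : N → Type*}
    [∀ i, Fintype (A i)] [∀ i, DecidableEq (A i)]
    (u : N → (∀ j, A j) → ℝ) (δ : ∀ i, A i → ℝ) (i : N) (ai : A i) : ℝ :=
  expUtil u (Function.update δ i (pureStrat i ai)) i

/-- Minimum of `u i` over pure action profiles. -/
noncomputable def minU {N : Type*} [Fintype N] [DecidableEq N] {A : N → Type*}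
    [∀ i, Fintype (A i)] [∀ i, Nonempty (A i)]
    (u : N → (∀ j, A j) → ℝ) (i : N) : ℝ :=
  Finset.univ.inf' Finset.univ_nonempty (u i)

/-- Maximum of `u i` over pure action profiles. -/
noncomputable def maxU {N : Type*} [Fintype N] [DecidableEq N] {A : N → Type*}
    [∀ i, Fintype (A i)] [∀ i, Nonempty (A i)]
    (u : N → (∀ j, A j) → ℝ) (i : N) : ℝ :=
  Finset.univ.sup' Finset.univ_nonempty (u i)

/-- `δ` is a Nash equilibrium. -/
def IsNashEq {N : Type*} [Fintype N] [DecidableEq N] {A : N → Type*}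
    [∀ i, Fintype (A i)] (u : N → (∀ j, A j) → ℝ) (δ : ∀ i, A i → ℝ) : Prop :=
  IsMixedProfile δ ∧ ∀ (i : N) (δ' : A i → ℝ), (∀ a, 0 ≤ δ' a) → (∑ a, δ' a = 1) →
    expUtil u (Function.update δ i δ') i ≤ expUtil u δ i

/-- `δ` is an ε-Nash equilibrium. -/
def IsEpsNashEq {N : Type*} [Fintype N] [DecidableEq N] {A : N → Type*}
    [∀ i, Fintype (A i)] (u : N → (∀ j, A j) → ℝ) (δ : ∀ i, A i → ℝ) (ε : ℝ) : Prop :=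
  IsMixedProfile δ ∧ ∀ (i : N) (δ' : A i → ℝ), (∀ a, 0 ≤ δ' a) → (∑ a, δ' a = 1) →
    expUtil u (Function.update δ i δ') i ≤ expUtil u δ i + ε

/-- Feasibility for the mixed-integer formulation (P). -/
def FeasP {N : Type*} [Fintype N] [DecidableEq N] {A : N → Type*}
    [∀ i, Fintype (A i)] [∀ i, DecidableEq (A i)] [∀ i, Nonempty (A i)]
    (u : N → (∀ j, A j) → ℝ) (δ : ∀ i, A i → ℝ) (v : N → ℝ)
    (z s : ∀ i, A i → ℝ) : Prop :=
  IsMixedProfile δ ∧ ∀ (i : N) (ai : A i),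
    v i = s i ai + devUtil u δ i ai ∧
    δ i ai ≤ z i ai ∧
    s i ai ≤ (1 - z i ai) * (maxU u i - minU u i) ∧
    0 ≤ s i ai ∧ s i ai ≤ maxU u i - minU u i ∧
    minU u i ≤ v i ∧ v i ≤ maxU u i ∧
    (z i ai = 0 ∨ z i ai = 1)

/-- Feasibility for the continuous formulation (Q). -/
def FeasQ {N : Type*} [Fintype N] [DecidableEq N] {A : N → Type*}
    [∀ i, Fintype (A i)] [∀ i, DecidableEq (A i)] [∀ i, Nonempty (A i)]
    (u : N → (∀ j, A j) → ℝ) (δ : ∀ i, A i → ℝ) (v : N → ℝ) : Prop :=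
  IsMixedProfile δ ∧ ∀ (i : N) (ai : A i),
    0 ≤ v i - devUtil u δ i ai ∧
    δ i ai * (v i - devUtil u δ i ai) = 0 ∧
    minU u i ≤ v i ∧ v i ≤ maxU u i

/-- Feasibility for the penalized formulation (R). -/
def FeasR {N : Type*} [Fintype N] [DecidableEq N] {A : N → Type*}
    [∀ i, Fintype (A i)] [∀ i, DecidableEq (A i)] [∀ i, Nonempty (A i)]
    (u : N → (∀ j, A j) → ℝ) (δ : ∀ i, A i → ℝ) (v : N → ℝ) (ϖ : ℝ) : Prop :=
  IsMixedProfile δ ∧ ∀ (i : N) (ai : A i),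
    δ i ai * (v i - devUtil u δ i ai) ≤ ϖ ∧
    -(δ i ai * (v i - devUtil u δ i ai)) ≤ ϖ ∧
    0 ≤ v i - devUtil u δ i ai ∧
    minU u i ≤ v i ∧ v i ≤ maxU u i

section

variable {N : Type*} [Fintype N] [DecidableEq N] {A : N → Type*}

lemma prod_update_apply (δ : ∀ i, A i → ℝ) (i : N) (g : A i → ℝ) (a : ∀ j, A j) :
    ∏ j, Function.update δ i g j (a j) = g (a i) * ∏ j ∈ univ.erase i, δ j (a j) := by
  simp_rw [Function.apply_update (fun j (d : A j → ℝ) => d (a j))]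
  rw [prod_update_of_mem (mem_univ i), sdiff_singleton_eq_erase]

variable [∀ i, Fintype (A i)]

lemma expUtil_update (u : N → (∀ j, A j) → ℝ) (δ : ∀ i, A i → ℝ) (i : N) (g : A i → ℝ) :
    expUtil u (Function.update δ i g) i =
      ∑ a : ∀ j, A j, g (a i) * ((∏ j ∈ univ.erase i, δ j (a j)) * u i a) := by
  simp only [expUtil, prod_update_apply, mul_assoc]

variable [∀ i, DecidableEq (A i)]

lemma expUtil_update_eq_sum_mul_devUtil (u : N → (∀ j, A j) → ℝ) (δ : ∀ i, A i → ℝ) (i : N)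
    (g : A i → ℝ) :
    expUtil u (Function.update δ i g) i = ∑ b, g b * devUtil u δ i b := by
  simp only [devUtil, expUtil_update, pureStrat, Finset.mul_sum, ite_mul, one_mul, zero_mul,
    mul_ite, mul_zero]
  rw [Finset.sum_comm]
  simp only [Finset.sum_ite_eq, mem_univ, if_true]

lemma sub_expUtil_update_eq_sum (u : N → (∀ j, A j) → ℝ) (δ : ∀ i, A i → ℝ) (i : N)
    (g : A i → ℝ) (hg : ∑ b, g b = 1) (w : ℝ) :
    w - expUtil u (Function.update δ i g) i = ∑ b, g b * (w - devUtil u δ i b) := by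
  simp only [mul_sub, Finset.sum_sub_distrib, ← Finset.sum_mul, hg, one_mul,
    expUtil_update_eq_sum_mul_devUtil]

variable [∀ i, Nonempty (A i)]

lemma FeasR.mul_sub_devUtil_eq_zero {u : N → (∀ j, A j) → ℝ} {δ : ∀ i, A i → ℝ} {v : N → ℝ}
    (hR : FeasR u δ v 0) (i : N) (a : A i) : δ i a * (v i - devUtil u δ i a) = 0 :=
  le_antisymm (hR.2 i a).1 (neg_nonpos.mp (hR.2 i a).2.1)

end

/-- Any feasible point of (R) with objective value `0` is an exact Nash
equilibrium. -/
theorem feasR_zero_isNashEq (u : N → (∀ j, A j) → ℝ) (δ : ∀ i, A i → ℝ)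
    (v : N → ℝ) (hR : FeasR u δ v 0) : IsNashEq u δ := by
  refine ⟨hR.1, fun i δ' hδ'_nonneg hδ'_sum => ?_⟩
  have h_value : v i - expUtil u δ i = 0 := by
    rw [← Function.update_eq_self i δ, sub_expUtil_update_eq_sum u δ i _ (hR.1.2 i)]
    exact Finset.sum_eq_zero fun a _ => hR.mul_sub_devUtil_eq_zero i a
  have h_deviation : 0 ≤ v i - expUtil u (Function.update δ i δ') i := by
    rw [sub_expUtil_update_eq_sum u δ i δ' hδ'_sum]
    exact Finset.sum_nonneg fun a _ => mul_nonneg (hδ'_nonneg a) (hR.2 i a).2.2.1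
  linarith
end

section
/- If (δ, v, z, s) is feasible for the mixed-integer formulation (P), then δ is an exact Nash equilibrium of the game. -/
open Finset

variable {N : Type*} [Fintype N] [DecidableEq N] [Nonempty N]
variable {A : N → Type*} [∀ i, Fintype (A i)] [∀ i, DecidableEq (A i)]
variable [∀ i, Nonempty (A i)]

section

variable {N : Type*} [Fintype N] [DecidableEq N]
variable {A : N → Type*}

lemma prod_update_eq_mul_prod_erase (δ : ∀ i, A i → ℝ) (i : N) (σ : A i → ℝ) (a : ∀ j, A j) :
    ∏ j, Function.update δ i σ j (a j) = σ (a i) * ∏ j ∈ univ.erase i, δ j (a j) := by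
  rw [← mul_prod_erase univ _ (mem_univ i), Function.update_self]
  congr 1
  exact prod_congr rfl fun j hj => by rw [Function.update_of_ne (ne_of_mem_erase hj)]

variable [∀ i, Fintype (A i)] [∀ i, DecidableEq (A i)]

lemma expUtil_update_eq_sum_devUtil (u : N → (∀ j, A j) → ℝ) (δ : ∀ i, A i → ℝ) (i : N)
    (σ : A i → ℝ) :
    expUtil u (Function.update δ i σ) i = ∑ ai, σ ai * devUtil u δ i ai := by
  simp only [devUtil, expUtil, prod_update_eq_mul_prod_erase, mul_sum]
  rw [sum_comm]
  refine sum_congr rfl fun a _ => ?_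
  rw [sum_eq_single (a i) (fun b _ hb => by simp [pureStrat, Ne.symm hb]) (by simp)]
  simp [pureStrat, mul_assoc]

lemma expUtil_eq_sum_devUtil (u : N → (∀ j, A j) → ℝ) (δ : ∀ i, A i → ℝ) (i : N) :
    expUtil u δ i = ∑ ai, δ i ai * devUtil u δ i ai := by
  simpa using expUtil_update_eq_sum_devUtil u δ i (δ i)

variable [∀ i, Nonempty (A i)] {u : N → (∀ j, A j) → ℝ} {δ : ∀ i, A i → ℝ} {v : N → ℝ}

/-- The binary `z i ai` forces either `δ i ai = 0` or zero regret `s i ai = v i - u_i(ai, δ_{-i})`,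
which is the complementarity condition of (Q). -/
lemma FeasP.feasQ {z s : ∀ i, A i → ℝ} (hP : FeasP u δ v z s) : FeasQ u δ v := by
  obtain ⟨hmix, hcon⟩ := hP
  refine ⟨hmix, fun i ai => ?_⟩
  obtain ⟨hv, hδz, hsz, hs, -, hmin, hmax, hz⟩ := hcon i ai
  have hregret : v i - devUtil u δ i ai = s i ai := by linarith
  rw [hregret]
  refine ⟨hs, ?_, hmin, hmax⟩
  rcases hz with hz | hz
  · rw [le_antisymm (hz ▸ hδz) (hmix.1 i ai), zero_mul]
  · rw [le_antisymm (by simpa [hz] using hsz) hs, mul_zero]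

/-- Under (Q), `v i` is the value of every action in the support of `δ i` and an upper bound
for the value of all the others, so no deviation of player `i` can beat `v i = u_i(δ)`. -/
lemma FeasQ.isNashEq (hQ : FeasQ u δ v) : IsNashEq u δ := by
  obtain ⟨hmix, hcon⟩ := hQ
  refine ⟨hmix, fun i δ' hδ' hsum => ?_⟩
  have hself : expUtil u δ i = v i := by
    rw [expUtil_eq_sum_devUtil]
    calc ∑ ai, δ i ai * devUtil u δ i ai = ∑ ai, δ i ai * v i :=
          sum_congr rfl fun ai _ => by linarith [(hcon i ai).2.1]
      _ = v i := by rw [← sum_mul, hmix.2 i, one_mul]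
  rw [hself, expUtil_update_eq_sum_devUtil]
  calc ∑ ai, δ' ai * devUtil u δ i ai ≤ ∑ ai, δ' ai * v i :=
        sum_le_sum fun ai _ => mul_le_mul_of_nonneg_left (by linarith [(hcon i ai).1]) (hδ' ai)
    _ = v i := by rw [← sum_mul, hsum, one_mul]

end

/-- Any feasible point of (P) is an exact Nash equilibrium. -/
theorem feasP_isNashEq (u : N → (∀ j, A j) → ℝ) (δ : ∀ i, A i → ℝ) (v : N → ℝ)
    (z s : ∀ i, A i → ℝ) (hP : FeasP u δ v z s) : IsNashEq u δ :=
  hP.feasQ.isNashEq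
end
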